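/- arXiv:1911.09620 — 2 statements merged into one kernel-verified Lean document; each statement's English description precedes it below -/
import Mathlib

section
/- Let φ be a permutation-invariant idempotent linear map on the tensor algebra, and let A, B be elements such that for all n, m ∈ ℕ one has φ(A^{⊗n} ⊗ B^{⊗m}) = φ(A^{⊗n}) ⊗ φ(B^{⊗m}) (A and B are M-unconnected). Then exp_M(A + B) = exp_M(A) ⊗ exp_M(B), where exp_M(X) := ∑_{n≥0} φ(X^{⊗n})/n!. -/
/-!
Permutation invariance of `φ` means that `φ (a * x * y * b) = φ (a * y * x * b)`, so the
relation "`φ (a * x * b) = φ (a * y * b)` for all `a, b`" is a ring congruence whose quotient sees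
`A` and `B` commuting. The commutative binomial theorem there gives
`φ ((A + B) ^ n) = ∑ C(n, j) φ (A ^ j * B ^ (n - j))`, and unconnectedness turns this into the
Cauchy product of the exponential generating series of `φ (A ^ n)` and `φ (B ^ n)`.
-/

open scoped BigOperators

/-- The generalized `M`-exponential `exp_M(X) := ∑ λ^n φ(X^{⊗n})/n!` as a formal power
series (working degree-wise with a formal parameter). -/
noncomputable def expM {K V : Type*} [Field K] [AddCommGroup V] [Module K V]
    (φ : TensorAlgebra K V →ₗ[K] TensorAlgebra K V) (A : TensorAlgebra K V) :
    PowerSeries (TensorAlgebra K V) :=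
  PowerSeries.mk fun n => (n.factorial : K)⁻¹ • φ (A ^ n)

open Finset

section Sandwich

variable {R M F : Type*} [Semiring R] [AddCommMonoid M] [FunLike F R M] [AddMonoidHomClass F R M]

def sandwichCon (f : F) : RingCon R where
  r x y := ∀ a b, f (a * x * b) = f (a * y * b)
  iseqv := ⟨fun _ _ _ => rfl, fun h a b => (h a b).symm, fun h h' a b => (h a b).trans (h' a b)⟩
  add' h h' a b := by simp only [mul_add, add_mul, map_add, h a b, h' a b]
  mul' {x y x' y'} h h' a b := calc
    f (a * (x * x') * b) = f (a * x * (x' * b)) := by simp only [mul_assoc]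
    _ = f (a * y * x' * b) := by rw [h]; simp only [mul_assoc]
    _ = f (a * (y * y') * b) := by rw [h', mul_assoc a]

theorem map_add_pow_of_map_mul_mul_comm (f : F)
    (hf : ∀ a b x y : R, f (a * x * y * b) = f (a * y * x * b)) (x y : R) (n : ℕ) :
    f ((x + y) ^ n) = ∑ j ∈ range (n + 1), n.choose j • f (x ^ j * y ^ (n - j)) := by
  set c := sandwichCon f
  have hcomm : Commute (c.mk' x) (c.mk' y) := by
    rw [Commute, SemiconjBy, ← map_mul, ← map_mul]
    exact c.eq.2 fun a b => by simp only [← mul_assoc, hf]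
  have hbinom : c ((x + y) ^ n) (∑ j ∈ range (n + 1), x ^ j * y ^ (n - j) * n.choose j) := by
    refine c.eq.1 (?_ : c.mk' _ = c.mk' _)
    simpa only [map_pow, map_add, map_sum, map_mul, map_natCast] using hcomm.add_pow n
  simpa only [mul_one, one_mul, map_sum, ← nsmul_eq_mul', map_nsmul] using hbinom 1 1

end Sandwich

theorem PowerSeries.mk_inv_factorial_smul_mul {K S : Type*} [Field K] [CharZero K] [Semiring S]
    [Algebra K S] (a b : ℕ → S) :
    mk (fun n => (n.factorial : K)⁻¹ • a n) * mk (fun n => (n.factorial : K)⁻¹ • b n) =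
      mk fun n => (n.factorial : K)⁻¹ • ∑ j ∈ range (n + 1), n.choose j • (a j * b (n - j)) := by
  ext n
  rw [coeff_mul, Nat.sum_antidiagonal_eq_sum_range_succ_mk, coeff_mk, smul_sum]
  refine sum_congr rfl fun j hj => ?_
  have hjn : j ≤ n := Nat.lt_succ_iff.mp (mem_range.mp hj)
  simp only [coeff_mk, smul_mul_smul_comm, ← Nat.cast_smul_eq_nsmul K, smul_smul]
  congr 1
  have hfac : (n.choose j * j.factorial * (n - j).factorial : K) = n.factorial := by
    exact_mod_cast Nat.choose_mul_factorial_mul_factorial hjn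
  have hchoose : (n.choose j : K) ≠ 0 := Nat.cast_ne_zero.2 (Nat.choose_pos hjn).ne'
  rw [← hfac, mul_inv, mul_inv]
  field_simp

theorem expM_add_of_unconnected_general
    {K V : Type*} [Field K] [CharZero K] [AddCommGroup V] [Module K V]
    (φ : TensorAlgebra K V →ₗ[K] TensorAlgebra K V)
    (hperm : ∀ l l' : List (TensorAlgebra K V), l.Perm l' → φ l.prod = φ l'.prod)
    (A B : TensorAlgebra K V)
    (hunconn : ∀ n m : ℕ, φ (A ^ n * B ^ m) = φ (A ^ n) * φ (B ^ m)) :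
    expM φ (A + B) = expM φ A * expM φ B := by
  have hswap : ∀ a b x y, φ (a * x * y * b) = φ (a * y * x * b) := fun a b x y => by
    simpa only [List.prod_cons, List.prod_nil, mul_one, mul_assoc]
      using hperm [a, x, y, b] [a, y, x, b] ((List.Perm.swap y x [b]).cons a)
  rw [expM, expM, expM, PowerSeries.mk_inv_factorial_smul_mul]
  simp only [map_add_pow_of_map_mul_mul_comm φ hswap, hunconn]

/-- if `A` and `B` are `M`-unconnected, i.e.
`φ(A^{⊗n} ⊗ B^{⊗m}) = φ(A^{⊗n}) ⊗ φ(B^{⊗m})` for all `n, m`, then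
`exp_M(A+B) = exp_M(A) ⊗ exp_M(B)`. -/
theorem expM_add_of_unconnected
    {K V : Type*} [Field K] [CharZero K] [AddCommGroup V] [Module K V]
    (φ : TensorAlgebra K V →ₗ[K] TensorAlgebra K V)
    (hidem : φ ∘ₗ φ = φ)
    (hperm : ∀ l l' : List (TensorAlgebra K V), l.Perm l' → φ l.prod = φ l'.prod)
    (A B : TensorAlgebra K V)
    (hunconn : ∀ n m : ℕ, φ (A ^ n * B ^ m) = φ (A ^ n) * φ (B ^ m)) :
    expM φ (A + B) = expM φ A * expM φ B :=
  expM_add_of_unconnected_general φ hperm A B hunconn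
end

section
/- Conversely, if exp_M(sA + tB) = exp_M(sA) ⊗ exp_M(tB) holds identically in formal scalar parameters s, t, then for all n, m ∈ ℕ one has φ(A^{⊗n} ⊗ B^{⊗m}) = φ(A^{⊗n}) ⊗ φ(B^{⊗m}). -/
open Finset PowerSeries

/-!
Comparing coefficients of `s ^ n` in the degree-`(n + m)` part of
`exp_M(s A + B) = exp_M(s A) exp_M(B)` gives the claim, once the left-hand side is expanded:
permutation invariance lets `φ` treat `A` and `B` as if they commuted, so that the binomial
theorem `φ ((A + B) ^ k) = ∑ (k choose i) φ (A ^ i B ^ (k - i))` holds under `φ`.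
-/

theorem map_mul_mul_comm_of_perm {R M F : Type*} [Monoid R] [FunLike F R M] {φ : F}
    (hperm : ∀ l l' : List R, l.Perm l' → φ l.prod = φ l'.prod) (a b c : R) :
    φ (a * (b * c)) = φ (a * (c * b)) := by
  simpa using hperm [a, b, c] [a, c, b] (.cons a (.swap c b []))

section Symmetrized

variable {R M F : Type*} [Semiring R] [AddCommMonoid M] [FunLike F R M]
  [AddMonoidHomClass F R M] {φ : F}

theorem map_mul_add_pow (hcomm : ∀ a b c : R, φ (a * (b * c)) = φ (a * (c * b)))
    (x y : R) (k : ℕ) (a : R) :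
    φ (a * (x + y) ^ k) = ∑ ij ∈ antidiagonal k, k.choose ij.1 • φ (a * (x ^ ij.1 * y ^ ij.2)) := by
  induction k generalizing a with
  | zero => simp
  | succ k ih =>
    rw [sum_antidiagonal_choose_succ_nsmul (fun i j => φ (a * (x ^ i * y ^ j))), pow_succ',
      ← mul_assoc, mul_add, add_mul, map_add, ih, ih, add_comm]
    congr 1
    · refine sum_congr rfl fun ij _ => ?_
      rw [mul_assoc, hcomm, mul_assoc, ← pow_succ]
    · refine sum_congr rfl fun ij hij => ?_
      rw [Nat.choose_symm_of_eq_add (mem_antidiagonal.mp hij).symm, mul_assoc, ← mul_assoc x,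
        ← pow_succ']

theorem map_add_pow (hcomm : ∀ a b c : R, φ (a * (b * c)) = φ (a * (c * b)))
    (x y : R) (k : ℕ) :
    φ ((x + y) ^ k) = ∑ ij ∈ antidiagonal k, k.choose ij.1 • φ (x ^ ij.1 * y ^ ij.2) := by
  simpa using map_mul_add_pow hcomm x y k 1

end Symmetrized

theorem eq_zero_of_forall_sum_pow_smul_eq_zero {R M : Type*} [CommRing R] [IsDomain R]
    [Infinite R] [AddCommGroup M] [Module R M] [Module.Projective R M] {N : ℕ} {v : ℕ → M}
    (h : ∀ s : R, ∑ i ∈ range N, s ^ i • v i = 0) {i : ℕ} (hi : i < N) : v i = 0 := by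
  refine (Module.forall_dual_apply_eq_zero_iff R (v i)).mp fun f => ?_
  have hp : (∑ j ∈ range N, Polynomial.monomial j (f (v j))) = 0 :=
    Polynomial.funext fun s => by
      simpa [Polynomial.eval_finsetSum, mul_comm] using congrArg f (h s)
  simpa [Polynomial.finsetSum_coeff, Polynomial.coeff_monomial, hi] using
    congrArg (Polynomial.coeff · i) hp

section ExpM

variable {K V : Type*} [Field K] [AddCommGroup V] [Module K V]
  (φ : TensorAlgebra K V →ₗ[K] TensorAlgebra K V)

theorem coeff_expM_mul_expM (x y : TensorAlgebra K V) (k : ℕ) :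
    coeff k (expM φ x * expM φ y) = ∑ ij ∈ antidiagonal k,
      ((ij.1.factorial : K)⁻¹ * (ij.2.factorial : K)⁻¹) • (φ (x ^ ij.1) * φ (y ^ ij.2)) := by
  simp only [expM, coeff_mul, coeff_mk, smul_mul_smul_comm]

theorem coeff_expM_add [CharZero K]
    (hcomm : ∀ a b c, φ (a * (b * c)) = φ (a * (c * b))) (x y : TensorAlgebra K V) (k : ℕ) :
    coeff k (expM φ (x + y)) = ∑ ij ∈ antidiagonal k,
      ((ij.1.factorial : K)⁻¹ * (ij.2.factorial : K)⁻¹) • φ (x ^ ij.1 * y ^ ij.2) := by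
  rw [expM, coeff_mk, map_add_pow hcomm, smul_sum]
  refine sum_congr rfl fun ij hij => ?_
  obtain rfl := mem_antidiagonal.mp hij
  rw [← Nat.cast_smul_eq_nsmul K, smul_smul, Nat.cast_add_choose]
  congr 1
  rw [mul_div_assoc', inv_mul_cancel₀ (Nat.cast_ne_zero.mpr (Nat.factorial_ne_zero _)), one_div,
    mul_inv]

end ExpM

theorem unconnected_of_expM_add_general
    {K V : Type*} [Field K] [CharZero K] [AddCommGroup V] [Module K V]
    (φ : TensorAlgebra K V →ₗ[K] TensorAlgebra K V)
    (hperm : ∀ l l' : List (TensorAlgebra K V), l.Perm l' → φ l.prod = φ l'.prod)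
    (A B : TensorAlgebra K V)
    (hfact : ∀ s t : K, expM φ (s • A + t • B) = expM φ (s • A) * expM φ (t • B)) :
    ∀ n m : ℕ, φ (A ^ n * B ^ m) = φ (A ^ n) * φ (B ^ m) := by
  intro n m
  set d : ℕ → ℕ → TensorAlgebra K V := fun i j =>
    ((i.factorial : K)⁻¹ * (j.factorial : K)⁻¹) • (φ (A ^ i * B ^ j) - φ (A ^ i) * φ (B ^ j))
  have hsum (s : K) : ∑ i ∈ range (n + m + 1), s ^ i • d i (n + m - i) = 0 := by
    have h := congrArg (coeff (n + m)) (hfact s 1)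
    rw [one_smul, coeff_expM_add φ (map_mul_mul_comm_of_perm hperm), coeff_expM_mul_expM,
      ← sub_eq_zero, ← sum_sub_distrib] at h
    rw [← Nat.sum_antidiagonal_eq_sum_range_succ (fun i j => s ^ i • d i j), ← h]
    refine sum_congr rfl fun ij _ => ?_
    simp only [d, smul_pow, map_smul, smul_mul_assoc, smul_sub, smul_smul, mul_comm]
  have hd : d n m = 0 := by
    simpa using eq_zero_of_forall_sum_pow_smul_eq_zero hsum (i := n) (by omega)
  simpa [d, sub_eq_zero, Nat.factorial_ne_zero] using hd

/-- conversely, if `exp_M(sA + tB) = exp_M(sA) ⊗ exp_M(tB)` holds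
identically in the scalar parameters `s, t` (over the infinite field `K`, so that the
coefficients of `s^n t^m` can be compared), then
`φ(A^{⊗n} ⊗ B^{⊗m}) = φ(A^{⊗n}) ⊗ φ(B^{⊗m})` for all `n, m`. -/
theorem unconnected_of_expM_add
    {K V : Type*} [Field K] [CharZero K] [AddCommGroup V] [Module K V]
    (φ : TensorAlgebra K V →ₗ[K] TensorAlgebra K V)
    (hidem : φ ∘ₗ φ = φ)
    (hperm : ∀ l l' : List (TensorAlgebra K V), l.Perm l' → φ l.prod = φ l'.prod)
    (A B : TensorAlgebra K V)
    (hfact : ∀ s t : K, expM φ (s • A + t • B) = expM φ (s • A) * expM φ (t • B)) :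
    ∀ n m : ℕ, φ (A ^ n * B ^ m) = φ (A ^ n) * φ (B ^ m) :=
  unconnected_of_expM_add_general φ hperm A B hfact
end
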